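/- arXiv:1610.03408 — 5 statements merged into one kernel-verified Lean document; each statement's English description precedes it below -/
import Mathlib

section
/- Let a1 > 0, a2 > 0 and let θ_1, …, θ_k be distributed according to the multiplicative inverse gamma prior with parameters (a1, a2). Then for every point (θ⁰_1, …, θ⁰_k) ∈ (0, ∞)^k, every k ≥ 1 and every ε > 0, one has P(∑_{h=1}^k |θ_h − θ⁰_h| < ε) > 0; that is, the prior has full support on the positive k-dimensional Euclidean space (0, ∞)^k. -/
open MeasureTheory ProbabilityTheory Real Filter Set

/-- Density of the inverse gamma distribution `Inv-Ga(a, b)`: equal to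
`b^a / Γ(a) · x^{-(a+1)} · e^{-b/x}` for `x > 0` and `0` otherwise. -/
noncomputable def invGammaPDF (a b : ℝ) (x : ℝ) : ℝ :=
  if 0 < x then b ^ a / Real.Gamma a * x ^ (-(a + 1)) * Real.exp (-b / x) else 0

/-- The inverse gamma distribution `Inv-Ga(a, b)` as a measure on `ℝ`. -/
noncomputable def invGammaMeasure (a b : ℝ) : Measure ℝ :=
  MeasureTheory.volume.withDensity (fun x => ENNReal.ofReal (invGammaPDF a b x))

/-! The prior is the law of the partial products of the independent sequence `ϑ`, and the map
`x ↦ ∑ h ∈ [1, k], |∏ l < h, x l - θ0 h|` is continuous for the product topology on `ℕ → ℝ`.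
Once `θ0` is set to `1` outside `[1, k]`, it vanishes at the positive sequence of successive
ratios `t l = θ0 (l + 1) / θ0 l`, so the event contains the preimage of a basic open
neighbourhood of `t`. By independence that preimage has probability a finite product of inverse
gamma masses of open sets meeting `(0, ∞)`, each positive because the inverse gamma density is
positive there. -/

theorem invGammaPDF_pos {a b x : ℝ} (ha : 0 < a) (hb : 0 < b) (hx : 0 < x) :
    0 < invGammaPDF a b x := by
  have := Real.Gamma_pos_of_pos ha
  rw [invGammaPDF, if_pos hx]
  positivity

theorem measurable_invGammaPDF (a b : ℝ) : Measurable (invGammaPDF a b) :=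
  Measurable.ite measurableSet_Ioi (by fun_prop) measurable_const

theorem invGammaMeasure_pos_of_isOpen {a b : ℝ} (ha : 0 < a) (hb : 0 < b) {u : Set ℝ}
    (hu : IsOpen u) (hu0 : (u ∩ Ioi 0).Nonempty) : 0 < invGammaMeasure a b u := by
  rw [pos_iff_ne_zero, invGammaMeasure, Ne,
    withDensity_apply_eq_zero' (measurable_invGammaPDF a b).ennreal_ofReal.aemeasurable]
  refine fun h => (hu.inter isOpen_Ioi).measure_ne_zero volume hu0 (measure_mono_null ?_ h)
  rintro x ⟨hxu, hx⟩
  exact ⟨(ENNReal.ofReal_pos.2 (invGammaPDF_pos ha hb hx)).ne', hxu⟩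

theorem ProbabilityTheory.iIndepFun.measure_preimage_pi_pos_of_isOpen {ι Ω β : Type*}
    [MeasurableSpace Ω] [TopologicalSpace β] [MeasurableSpace β] [OpensMeasurableSpace β]
    {μ : Measure Ω} {X : ι → Ω → β} (hX : ∀ i, Measurable (X i)) (hindep : iIndepFun X μ)
    {t : ι → β} (ht : ∀ i u, IsOpen u → t i ∈ u → 0 < μ.map (X i) u) {S : Set (ι → β)}
    (hS : IsOpen S) (htS : t ∈ S) : 0 < μ {ω | (fun i => X i ω) ∈ S} := by
  obtain ⟨I, u, hu, hIu⟩ := isOpen_pi_iff.1 hS t htS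
  calc 0 < ∏ i ∈ I, μ (X i ⁻¹' u i) := CanonicallyOrderedAdd.prod_pos.2 fun i hi => by
        rw [← Measure.map_apply (hX i) (hu i hi).1.measurableSet]
        exact ht i (u i) (hu i hi).1 (hu i hi).2
    _ = μ (⋂ i ∈ I, X i ⁻¹' u i) :=
        (hindep.meas_biInter fun i hi => ⟨u i, (hu i hi).1.measurableSet, rfl⟩).symm
    _ ≤ μ {ω | (fun i => X i ω) ∈ S} := measure_mono fun ω hω => hIu (by simpa using hω)

theorem exists_pos_prod_range_eq {K : Type*} [Field K] [LinearOrder K] [IsStrictOrderedRing K]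
    {θ : ℕ → K} (hθ : ∀ h, 0 < θ h) (hθ0 : θ 0 = 1) :
    ∃ t : ℕ → K, (∀ l, 0 < t l) ∧ ∀ h, ∏ l ∈ Finset.range h, t l = θ h :=
  ⟨fun l => θ (l + 1) / θ l, fun _ => div_pos (hθ _) (hθ _), fun h =>
    Finset.prod_range_induction _ _ hθ0 h fun n _ => (mul_div_cancel₀ _ (hθ n).ne').symm⟩

theorem multiplicative_inverse_gamma_full_support_general
    {Ω : Type*} [MeasureSpace Ω]
    (a1 a2 : ℝ) (ha1 : 0 < a1) (ha2 : 0 < a2)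
    (k : ℕ) (ϑ : ℕ → Ω → ℝ)
    (hmeas : ∀ l, Measurable (ϑ l))
    (hindep : iIndepFun ϑ ℙ)
    (hlaw1 : Measure.map (ϑ 0) ℙ = invGammaMeasure a1 1)
    (hlaw2 : ∀ l, 1 ≤ l → Measure.map (ϑ l) ℙ = invGammaMeasure a2 1)
    (θ0 : ℕ → ℝ) (hθ0 : ∀ h, 1 ≤ h → h ≤ k → 0 < θ0 h)
    (ε : ℝ) (hε : 0 < ε) :
    0 < ℙ {ω | ∑ h ∈ Finset.Icc 1 k, |(∏ l ∈ Finset.range h, ϑ l ω) - θ0 h| < ε} := by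
  set θ : ℕ → ℝ := fun h => if 1 ≤ h ∧ h ≤ k then θ0 h else 1
  have hθ : ∀ h, 0 < θ h := fun h => by
    dsimp only [θ]
    split_ifs with hh
    exacts [hθ0 h hh.1 hh.2, one_pos]
  obtain ⟨t, ht_pos, ht_prod⟩ := exists_pos_prod_range_eq hθ (by simp [θ])
  have hS : IsOpen {x : ℕ → ℝ | ∑ h ∈ Finset.Icc 1 k, |(∏ l ∈ Finset.range h, x l) - θ0 h| < ε} :=
    isOpen_lt (by fun_prop) continuous_const
  have htS : ∑ h ∈ Finset.Icc 1 k, |(∏ l ∈ Finset.range h, t l) - θ0 h| < ε := by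
    rwa [Finset.sum_eq_zero fun h hh => by simp [ht_prod, θ, Finset.mem_Icc.1 hh]]
  refine hindep.measure_preimage_pi_pos_of_isOpen hmeas (fun l u hu htu => ?_) hS htS
  rcases l with _ | l
  · exact hlaw1 ▸ invGammaMeasure_pos_of_isOpen ha1 one_pos hu ⟨_, htu, ht_pos 0⟩
  · exact hlaw2 (l + 1) l.succ_pos ▸
      invGammaMeasure_pos_of_isOpen ha2 one_pos hu ⟨_, htu, ht_pos (l + 1)⟩

/-- the multiplicative inverse gamma prior has full support on `(0, ∞)^k`. -/
theorem multiplicative_inverse_gamma_full_support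
    {Ω : Type*} [MeasureSpace Ω] [IsProbabilityMeasure (ℙ : Measure Ω)]
    (a1 a2 : ℝ) (ha1 : 0 < a1) (ha2 : 0 < a2)
    (k : ℕ) (hk : 1 ≤ k) (ϑ : ℕ → Ω → ℝ)
    (hmeas : ∀ l, Measurable (ϑ l))
    (hindep : iIndepFun ϑ ℙ)
    (hlaw1 : Measure.map (ϑ 0) ℙ = invGammaMeasure a1 1)
    (hlaw2 : ∀ l, 1 ≤ l → Measure.map (ϑ l) ℙ = invGammaMeasure a2 1)
    (θ0 : ℕ → ℝ) (hθ0 : ∀ h, 1 ≤ h → h ≤ k → 0 < θ0 h)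
    (ε : ℝ) (hε : 0 < ε) :
    0 < ℙ {ω | ∑ h ∈ Finset.Icc 1 k, |(∏ l ∈ Finset.range h, ϑ l ω) - θ0 h| < ε} :=
  multiplicative_inverse_gamma_full_support_general a1 a2 ha1 ha2 k ϑ hmeas hindep hlaw1 hlaw2 θ0
    hθ0 ε hε
end

section
/- Let a1 ≥ a2 > 1 and let θ_1, …, θ_k (k ≥ 2) be distributed according to the multiplicative inverse gamma prior with parameters (a1, a2). Then the sequence is not stochastically decreasing: for every h ∈ {1, …, k−1} there exists θ > 0 such that P(θ_{h+1} ≤ θ) < P(θ_h ≤ θ). In particular, there exist (infinitely many) multiplicative inverse gamma priors with a2 > 1 for which the stochastic order θ_1 ⪰ θ_2 ⪰ ⋯ ⪰ θ_k fails. -/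
open MeasureTheory ProbabilityTheory Real Filter Set

open scoped ENNReal Topology

/-!
If `θ_{h+1}` were stochastically smaller than `θ_h` on `(0, ∞)`, the layer-cake formula would
give `E[θ_{h+1}^s] ≤ E[θ_h^s]` for every `s > 0`. By independence
`E[θ_{h+1}^s] = E[θ_h^s] · E[ϑ_{h+1}^s]`, and for `ϑ ~ Inv-Ga(a, 1)` and `s < a` the
substitution `x ↦ x⁻¹` turns `E[ϑ^s]` into `Γ(a - s) / Γ(a)`. Since `Γ` blows up at `0`, this
ratio exceeds `1` for `s` close to `a₂`, while all moments involved stay finite and positive.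
-/

namespace Real

theorem tendsto_Gamma_nhdsGT_zero : Tendsto Gamma (𝓝[>] 0) atTop := by
  have hΓ1 : ContinuousAt Gamma 1 :=
    (differentiableAt_Gamma fun m h => by linarith [m.cast_nonneg (α := ℝ)]).continuousAt
  have hshift : ContinuousAt (fun b => Gamma (b + 1)) 0 :=
    hΓ1.comp_of_eq (continuous_add_const 1).continuousAt (zero_add 1)
  have hlim : Tendsto (fun b => Gamma (b + 1)) (𝓝[>] 0) (𝓝 1) := by
    simpa [Gamma_one] using hshift.tendsto.mono_left nhdsWithin_le_nhds
  refine (hlim.pos_mul_atTop one_pos tendsto_inv_nhdsGT_zero).congr' ?_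
  filter_upwards [self_mem_nhdsWithin] with b hb
  rw [Gamma_add_one (ne_of_gt hb), mul_comm b, mul_assoc, mul_inv_cancel₀ (ne_of_gt hb), mul_one]

theorem exists_Gamma_lt_Gamma_sub {a : ℝ} (ha : 0 < a) :
    ∃ s, 0 < s ∧ s < a ∧ Gamma a < Gamma (a - s) := by
  obtain ⟨b, hGb, hb⟩ := ((tendsto_Gamma_nhdsGT_zero.eventually_gt_atTop (Gamma a)).and
    (Ioo_mem_nhdsGT ha)).exists
  exact ⟨a - b, by linarith [hb.2], by linarith [hb.1], by rwa [sub_sub_cancel]⟩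

end Real

theorem lintegral_Ioi_zero_comp_inv (g : ℝ → ℝ≥0∞) :
    ∫⁻ x in Ioi 0, g x = ∫⁻ y in Ioi 0, ENNReal.ofReal (y ^ 2)⁻¹ * g y⁻¹ := by
  have himage : Inv.inv '' Ioi (0 : ℝ) = Ioi 0 := by
    rw [Set.image_inv_eq_inv]; ext; simp
  conv_lhs => rw [← himage]
  rw [lintegral_image_eq_lintegral_abs_deriv_mul measurableSet_Ioi
    (fun y hy => (hasDerivAt_inv (ne_of_gt hy)).hasDerivWithinAt) inv_injective.injOn]
  simp only [abs_neg, abs_inv, abs_pow, sq_abs]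

theorem lintegral_Ioi_rpow_mul_exp_neg_inv {c : ℝ} (hc : 0 < c) :
    ∫⁻ x in Ioi 0, ENNReal.ofReal (x ^ (-(c + 1)) * exp (-1 / x)) = ENNReal.ofReal (Gamma c) := by
  rw [lintegral_Ioi_zero_comp_inv, Gamma_eq_integral hc, ofReal_integral_eq_lintegral_ofReal
    (GammaIntegral_convergent hc) ((ae_restrict_iff' measurableSet_Ioi).2 (ae_of_all _
      fun y (hy : 0 < y) => by positivity))]
  refine setLIntegral_congr_fun measurableSet_Ioi fun y (hy : 0 < y) => ?_
  rw [← ENNReal.ofReal_mul (by positivity), inv_rpow hy.le, rpow_neg hy.le, inv_inv,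
    div_inv_eq_mul, neg_one_mul, rpow_add hy, rpow_sub hy, rpow_one]
  congr 1
  field_simp

theorem invGammaMeasure_eq_withDensity (a b : ℝ) :
    invGammaMeasure a b = (volume.restrict (Ioi 0)).withDensity
      fun x => ENNReal.ofReal (b ^ a / Gamma a * x ^ (-(a + 1)) * exp (-b / x)) := by
  rw [invGammaMeasure, ← withDensity_indicator measurableSet_Ioi]
  congr 1
  funext x
  by_cases hx : 0 < x <;> simp [invGammaPDF, hx]

theorem ae_pos_invGammaMeasure (a b : ℝ) : ∀ᵐ x ∂invGammaMeasure a b, 0 < x := by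
  rw [invGammaMeasure_eq_withDensity]
  exact (withDensity_absolutelyContinuous _ _).ae_le (ae_restrict_mem measurableSet_Ioi)

theorem lintegral_rpow_invGammaMeasure {a s : ℝ} (ha : 0 < a) (hs : s < a) :
    ∫⁻ x, ENNReal.ofReal (x ^ s) ∂invGammaMeasure a 1 =
      ENNReal.ofReal (Gamma (a - s) / Gamma a) := by
  rw [invGammaMeasure_eq_withDensity, lintegral_withDensity_eq_lintegral_mul _ (by fun_prop)
    (by fun_prop)]
  calc _ = ∫⁻ x in Ioi 0, ENNReal.ofReal (Gamma a)⁻¹ *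
          ENNReal.ofReal (x ^ (-((a - s) + 1)) * exp (-1 / x)) := by
        refine setLIntegral_congr_fun measurableSet_Ioi fun x (hx : 0 < x) => ?_
        rw [Pi.mul_apply, ← ENNReal.ofReal_mul (by positivity), ← ENNReal.ofReal_mul
          (by positivity), one_rpow, show -((a - s) + 1) = -(a + 1) + s by ring, rpow_add hx]
        congr 1
        ring
    _ = ENNReal.ofReal (Gamma (a - s) / Gamma a) := by
        rw [lintegral_const_mul _ (by fun_prop), lintegral_Ioi_rpow_mul_exp_neg_inv (by linarith),
          ← ENNReal.ofReal_mul (by positivity), inv_mul_eq_div]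

section StochasticOrder

variable {Ω : Type*} [MeasurableSpace Ω] {μ : Measure Ω} {X Y : Ω → ℝ}

theorem lintegral_ofReal_le_of_measure_lt_le (hX : 0 ≤ᵐ[μ] X) (hY : 0 ≤ᵐ[μ] Y)
    (hXm : AEMeasurable X μ) (hYm : AEMeasurable Y μ)
    (htail : ∀ t, 0 < t → μ {ω | t < X ω} ≤ μ {ω | t < Y ω}) :
    ∫⁻ ω, ENNReal.ofReal (X ω) ∂μ ≤ ∫⁻ ω, ENNReal.ofReal (Y ω) ∂μ := by
  rw [lintegral_eq_lintegral_meas_lt μ hX hXm, lintegral_eq_lintegral_meas_lt μ hY hYm]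
  exact setLIntegral_mono' measurableSet_Ioi htail

theorem lintegral_rpow_le_of_measure_lt_le (hX : 0 ≤ᵐ[μ] X) (hY : 0 ≤ᵐ[μ] Y)
    (hXm : AEMeasurable X μ) (hYm : AEMeasurable Y μ) {s : ℝ} (hs : 0 < s)
    (htail : ∀ t, 0 < t → μ {ω | t < X ω} ≤ μ {ω | t < Y ω}) :
    ∫⁻ ω, ENNReal.ofReal (X ω ^ s) ∂μ ≤ ∫⁻ ω, ENNReal.ofReal (Y ω ^ s) ∂μ := by
  have hlevel : ∀ {Z : Ω → ℝ}, 0 ≤ᵐ[μ] Z → ∀ t, 0 < t →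
      μ {ω | t < Z ω ^ s} = μ {ω | t ^ s⁻¹ < Z ω} := by
    intro Z hZ t ht
    refine measure_congr (eventuallyEq_set.2 ?_)
    filter_upwards [hZ] with ω hω
    exact (rpow_inv_lt_iff_of_pos ht.le hω hs).symm
  refine lintegral_ofReal_le_of_measure_lt_le (hX.mono fun ω hω => rpow_nonneg hω s)
    (hY.mono fun ω hω => rpow_nonneg hω s) (hXm.pow_const s) (hYm.pow_const s) fun t ht => ?_
  rw [hlevel hX t ht, hlevel hY t ht]
  exact htail _ (rpow_pos_of_pos ht _)

theorem lintegral_rpow_le_of_measure_le_le [IsProbabilityMeasure μ] (hX : 0 ≤ᵐ[μ] X)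
    (hY : 0 ≤ᵐ[μ] Y) (hXm : Measurable X) (hYm : Measurable Y) {s : ℝ} (hs : 0 < s)
    (hcdf : ∀ t, 0 < t → μ {ω | Y ω ≤ t} ≤ μ {ω | X ω ≤ t}) :
    ∫⁻ ω, ENNReal.ofReal (X ω ^ s) ∂μ ≤ ∫⁻ ω, ENNReal.ofReal (Y ω ^ s) ∂μ := by
  refine lintegral_rpow_le_of_measure_lt_le hX hY hXm.aemeasurable hYm.aemeasurable hs
    fun t ht => ?_
  have htail : ∀ {Z : Ω → ℝ}, Measurable Z → μ {ω | t < Z ω} = 1 - μ {ω | Z ω ≤ t} := by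
    intro Z hZ
    simp_rw [← not_le]
    exact prob_compl_eq_one_sub (measurableSet_le hZ measurable_const)
  rw [htail hXm, htail hYm]
  exact tsub_le_tsub_left (hcdf t ht) 1

end StochasticOrder

theorem lintegral_rpow_prod_eq_prod_of_iIndepFun {Ω ι : Type*} [MeasurableSpace Ω]
    {μ : Measure Ω} {X : ι → Ω → ℝ} (hX : iIndepFun X μ) (hXm : ∀ i, Measurable (X i))
    (hX0 : ∀ i, 0 ≤ᵐ[μ] X i) (S : Finset ι) (s : ℝ) :
    ∫⁻ ω, ENNReal.ofReal ((∏ i ∈ S, X i ω) ^ s) ∂μ =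
      ∏ i ∈ S, ∫⁻ ω, ENNReal.ofReal (X i ω ^ s) ∂μ := by
  have hpow : Measurable fun x : ℝ => ENNReal.ofReal (x ^ s) := by fun_prop
  have hind : iIndepFun (fun i ω => ENNReal.ofReal (X i ω ^ s)) μ :=
    hX.comp (fun _ x => ENNReal.ofReal (x ^ s)) fun _ => hpow
  rw [← lintegral_prod_eq_prod_lintegral_of_indepFun S _ hind fun i => hpow.comp (hXm i)]
  refine lintegral_congr_ae ?_
  filter_upwards [(eventually_all_finset S).2 fun i _ => hX0 i] with ω hω
  rw [← finsetProd_rpow _ _ hω, ENNReal.ofReal_prod_of_nonneg fun i hi => rpow_nonneg (hω i hi) s]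

theorem lintegral_rpow_of_map_eq_invGammaMeasure {Ω : Type*} [MeasurableSpace Ω]
    {μ : Measure Ω} {X : Ω → ℝ} (hXm : Measurable X) {a s : ℝ} (ha : 0 < a) (hs : s < a)
    (hlaw : μ.map X = invGammaMeasure a 1) :
    ∫⁻ ω, ENNReal.ofReal (X ω ^ s) ∂μ = ENNReal.ofReal (Gamma (a - s) / Gamma a) := by
  rw [← lintegral_rpow_invGammaMeasure ha hs, ← hlaw, lintegral_map (by fun_prop) hXm]

theorem multiplicative_inverse_gamma_not_stochastically_ordered_general
    {Ω : Type*} [MeasureSpace Ω] [IsProbabilityMeasure (ℙ : Measure Ω)]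
    (a1 a2 : ℝ) (ha12 : a2 ≤ a1) (ha2 : 1 < a2)
    (k : ℕ) (ϑ : ℕ → Ω → ℝ)
    (hmeas : ∀ l, Measurable (ϑ l))
    (hindep : iIndepFun ϑ ℙ)
    (hlaw1 : Measure.map (ϑ 0) ℙ = invGammaMeasure a1 1)
    (hlaw2 : ∀ l, 1 ≤ l → Measure.map (ϑ l) ℙ = invGammaMeasure a2 1) :
    ∀ h, 1 ≤ h → h ≤ k - 1 →
      ∃ θ : ℝ, 0 < θ ∧
        ℙ {ω | (∏ l ∈ Finset.range (h + 1), ϑ l ω) ≤ θ} <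
          ℙ {ω | (∏ l ∈ Finset.range h, ϑ l ω) ≤ θ} := by
  intro h hh _
  by_contra! hcdf
  have hlaw : ∀ l, ∃ a, a2 ≤ a ∧ Measure.map (ϑ l) ℙ = invGammaMeasure a 1 := fun l =>
    l.eq_zero_or_pos.elim (fun hl => ⟨a1, ha12, hl ▸ hlaw1⟩) fun hl => ⟨a2, le_rfl, hlaw2 l hl⟩
  have hpos : ∀ l, 0 ≤ᵐ[ℙ] ϑ l := fun l => by
    obtain ⟨a, -, hl⟩ := hlaw l
    exact ae_of_ae_map (hmeas l).aemeasurable (hl ▸ (ae_pos_invGammaMeasure a 1).mono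
      fun _ => le_of_lt)
  obtain ⟨s, hs0, hsa2, hΓ⟩ := exists_Gamma_lt_Gamma_sub (by linarith : 0 < a2)
  have hfactor : ∀ l, ∫⁻ ω, ENNReal.ofReal (ϑ l ω ^ s) ∂ℙ ≠ 0 ∧
      ∫⁻ ω, ENNReal.ofReal (ϑ l ω ^ s) ∂ℙ ≠ ⊤ := fun l => by
    obtain ⟨a, ha, hl⟩ := hlaw l
    rw [lintegral_rpow_of_map_eq_invGammaMeasure (hmeas l) (by linarith) (by linarith) hl]
    exact ⟨(ENNReal.ofReal_pos.2 (div_pos (Gamma_pos_of_pos (by linarith))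
      (Gamma_pos_of_pos (by linarith)))).ne', ENNReal.ofReal_ne_top⟩
  have hgrowth : 1 < ∫⁻ ω, ENNReal.ofReal (ϑ h ω ^ s) ∂ℙ := by
    rw [lintegral_rpow_of_map_eq_invGammaMeasure (hmeas h) (by linarith) hsa2 (hlaw2 h hh),
      ENNReal.one_lt_ofReal]
    exact (one_lt_div (Gamma_pos_of_pos (by linarith))).2 hΓ
  have hprod0 : ∀ n, 0 ≤ᵐ[ℙ] fun ω => ∏ l ∈ Finset.range n, ϑ l ω := fun n => by
    filter_upwards [ae_all_iff.2 hpos] with ω hω using Finset.prod_nonneg fun l _ => hω l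
  have hle := lintegral_rpow_le_of_measure_le_le (hprod0 (h + 1)) (hprod0 h)
    (Finset.measurable_prod _ fun l _ => hmeas l) (Finset.measurable_prod _ fun l _ => hmeas l)
    hs0 hcdf
  rw [lintegral_rpow_prod_eq_prod_of_iIndepFun hindep hmeas hpos,
    lintegral_rpow_prod_eq_prod_of_iIndepFun hindep hmeas hpos, Finset.prod_range_succ] at hle
  refine hle.not_gt ?_
  simpa using ENNReal.mul_lt_mul_right (Finset.prod_ne_zero_iff.2 fun l _ => (hfactor l).1)
    (ENNReal.prod_ne_top fun l _ => (hfactor l).2) hgrowth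

/-- for `a1 ≥ a2 > 1`, the multiplicative inverse gamma prior is not
stochastically decreasing: for each `h` there is `θ > 0` with
`P(θ_{h+1} ≤ θ) < P(θ_h ≤ θ)`. -/
theorem multiplicative_inverse_gamma_not_stochastically_ordered
    {Ω : Type*} [MeasureSpace Ω] [IsProbabilityMeasure (ℙ : Measure Ω)]
    (a1 a2 : ℝ) (ha12 : a2 ≤ a1) (ha2 : 1 < a2)
    (k : ℕ) (hk : 2 ≤ k) (ϑ : ℕ → Ω → ℝ)
    (hmeas : ∀ l, Measurable (ϑ l))
    (hindep : iIndepFun ϑ ℙ)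
    (hlaw1 : Measure.map (ϑ 0) ℙ = invGammaMeasure a1 1)
    (hlaw2 : ∀ l, 1 ≤ l → Measure.map (ϑ l) ℙ = invGammaMeasure a2 1) :
    ∀ h, 1 ≤ h → h ≤ k - 1 →
      ∃ θ : ℝ, 0 < θ ∧
        ℙ {ω | (∏ l ∈ Finset.range (h + 1), ϑ l ω) ≤ θ} <
          ℙ {ω | (∏ l ∈ Finset.range h, ϑ l ω) ≤ θ} :=
  multiplicative_inverse_gamma_not_stochastically_ordered_general a1 a2 ha12 ha2 k ϑ hmeas hindep
    hlaw1 hlaw2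
end

section
/- For every a > 0 and every c > 0, the ratio of the density of a product of two independent inverse gammas (scaled by c) to the density of Inv-Ga(a, c) diverges at zero: the function θ ↦ (1/Γ(a)) · e^{c/θ} · ∫_0^∞ x^{−1} · e^{−c/x − x/θ} dx tends to +∞ as θ → 0⁺. In particular this ratio eventually exceeds 1 near 0. -/
/-!
On `[2θ, 4θ]` the integrand is at least `(4θ)⁻¹ e^{-c/(2θ) - 4}`, so the integral is at least
`e^{-c/(2θ) - 4} / 2`, and the ratio is at least `e^{c/(2θ) - 4} / (2 Γ(a))`, which tends to `+∞`
as `θ → 0⁺`. The bound `x⁻¹ e^{-c/x} ≤ c⁻¹` makes the integrand integrable on `(0, ∞)`, so the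
integral is not a junk value.
-/

open MeasureTheory Real Filter Set

lemma inv_mul_exp_neg_div_le {c x : ℝ} (hc : 0 < c) (hx : 0 < x) :
    x⁻¹ * exp (-c / x) ≤ c⁻¹ := by
  have h := add_one_le_exp (c / x)
  rw [neg_div, exp_neg, ← div_eq_mul_inv, div_le_iff₀ (exp_pos _)]
  calc x⁻¹ = c⁻¹ * (c / x) := by field_simp
    _ ≤ c⁻¹ * exp (c / x) := by gcongr; linarith

lemma integrableOn_inv_mul_exp_neg_div_sub_div {c θ : ℝ} (hc : 0 < c) (hθ : 0 < θ) :
    IntegrableOn (fun x => x⁻¹ * exp (-c / x - x / θ)) (Ioi 0) := by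
  have hcont : ContinuousOn (fun x : ℝ => x⁻¹ * exp (-c / x - x / θ)) (Ioi 0) :=
    ContinuousOn.mul (continuousOn_inv₀.mono fun x hx => ne_of_gt hx) <| by
      refine continuous_exp.comp_continuousOn (ContinuousOn.sub ?_ (by fun_prop))
      exact continuousOn_const.div continuousOn_id fun x hx => ne_of_gt hx
  refine ((exp_neg_integrableOn_Ioi 0 (inv_pos.2 hθ)).const_mul c⁻¹).mono'
    (hcont.aestronglyMeasurable measurableSet_Ioi) ?_
  refine (ae_restrict_iff' measurableSet_Ioi).2 (ae_of_all _ fun x (hx : 0 < x) => ?_)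
  rw [norm_of_nonneg (by positivity), sub_eq_add_neg, exp_add, ← mul_assoc]
  rw [show -(x / θ) = -θ⁻¹ * x by ring]
  gcongr
  exact inv_mul_exp_neg_div_le hc hx

lemma exp_neg_div_two_sub_le_integral {c θ : ℝ} (hc : 0 < c) (hθ : 0 < θ) :
    exp (-(c / θ / 2) - 4) / 2 ≤ ∫ x in Ioi 0, x⁻¹ * exp (-c / x - x / θ) := by
  have hf := integrableOn_inv_mul_exp_neg_div_sub_div hc hθ
  have hsub : Icc (2 * θ) (4 * θ) ⊆ Ioi 0 := fun x hx => by
    simp only [mem_Ioi]; linarith [hx.1]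
  have hbound : ∀ x ∈ Icc (2 * θ) (4 * θ),
      (4 * θ)⁻¹ * exp (-(c / θ / 2) - 4) ≤ x⁻¹ * exp (-c / x - x / θ) := by
    rintro x ⟨hlo, hhi⟩
    have hx : 0 < x := by linarith
    have hfirst : c / x ≤ c / θ / 2 := by
      rw [div_div, mul_comm]; gcongr
    have hsecond : x / θ ≤ 4 := by rwa [div_le_iff₀ hθ]
    gcongr
    rw [neg_div]
    linarith
  calc exp (-(c / θ / 2) - 4) / 2
      = (4 * θ)⁻¹ * exp (-(c / θ / 2) - 4) * volume.real (Icc (2 * θ) (4 * θ)) := by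
        rw [volume_real_Icc, max_eq_left (by linarith)]
        field_simp
        ring
    _ ≤ ∫ x in Icc (2 * θ) (4 * θ), x⁻¹ * exp (-c / x - x / θ) :=
        setIntegral_ge_of_const_le_real measurableSet_Icc measure_Icc_lt_top.ne hbound
          (hf.mono_set hsub)
    _ ≤ ∫ x in Ioi 0, x⁻¹ * exp (-c / x - x / θ) :=
        setIntegral_mono_set hf ((ae_restrict_iff' measurableSet_Ioi).2
          (ae_of_all _ fun x (hx : 0 < x) => by positivity)) hsub.eventuallyLE

/-- the ratio `(1/Γ(a)) e^{c/θ} ∫_0^∞ x⁻¹ e^{-c/x - x/θ} dx` tends to `+∞`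
as `θ → 0⁺`; in particular it eventually exceeds `1` near `0`. -/
theorem density_ratio_tendsto_atTop (a c : ℝ) (ha : 0 < a) (hc : 0 < c) :
    Tendsto
      (fun θ : ℝ => 1 / Real.Gamma a * Real.exp (c / θ) *
        ∫ x in Set.Ioi (0 : ℝ), x⁻¹ * Real.exp (-c / x - x / θ))
      (nhdsWithin 0 (Set.Ioi 0)) atTop ∧
    ∀ᶠ θ : ℝ in nhdsWithin 0 (Set.Ioi 0),
      1 < 1 / Real.Gamma a * Real.exp (c / θ) *
        ∫ x in Set.Ioi (0 : ℝ), x⁻¹ * Real.exp (-c / x - x / θ) := by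
  have hΓ : 0 < Gamma a := Gamma_pos_of_pos ha
  have hexponent : Tendsto (fun θ : ℝ => c / θ / 2 - 4) (nhdsWithin 0 (Ioi 0)) atTop := by
    refine tendsto_atTop_add_const_right _ _ (Tendsto.atTop_div_const two_pos ?_)
    exact (tendsto_inv_nhdsGT_zero.const_mul_atTop hc).congr fun θ => (div_eq_mul_inv c θ).symm
  have hlower : Tendsto (fun θ : ℝ => 1 / Gamma a * (exp (c / θ / 2 - 4) / 2))
      (nhdsWithin 0 (Ioi 0)) atTop :=
    ((tendsto_exp_atTop.comp hexponent).atTop_div_const two_pos).const_mul_atTop (by positivity)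
  refine (fun hratio => ⟨hratio, hratio.eventually_gt_atTop 1⟩) (tendsto_atTop_mono' _ ?_ hlower)
  filter_upwards [self_mem_nhdsWithin] with θ (hθ : 0 < θ)
  calc 1 / Gamma a * (exp (c / θ / 2 - 4) / 2)
      = 1 / Gamma a * exp (c / θ) * (exp (-(c / θ / 2) - 4) / 2) := by
        rw [show c / θ / 2 - 4 = c / θ + (-(c / θ / 2) - 4) by ring, exp_add]
        ring
    _ ≤ _ := by gcongr; exact exp_neg_div_two_sub_le_integral hc hθ
end

section
/- For every a1 > 0 and a2 > 0, the function θ ↦ (1/Γ(a2)) · θ^{a1−a2} · e^{1/θ} · ∫_0^∞ x^{−(a1−a2+1)} · e^{−1/x − x/θ} dx tends to +∞ as θ → 0⁺. In particular, the ratio of the density of the product of independent Inv-Ga(a1, 1) and Inv-Ga(a2, 1) random variables to the density of Inv-Ga(a1, 1) eventually exceeds 1 near 0. -/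
/-!
Near `x = √θ` the exponent `-1/x - x/θ` is about `-2/√θ`, so restricting the integral to the
window `[√θ, 2√θ]` bounds it below by a constant times `θ^((p+1)/2) e^{-3/√θ}`, where `p` is the
power of `x`. After multiplying by `θ^(a1-a2) e^{1/θ}` this leaves `θ^((a1-a2)/2) e^{1/θ - 3/√θ}`,
in which `e^{1/θ}` dominates. Integrability (without which the integral would be the junk value
`0`) comes from `e^{-1/x} ≤ n! xⁿ`, which tames any power of `x` at `0`.
-/

open MeasureTheory Real Filter Set
open scoped Nat Topology

lemma exp_neg_one_div_le_factorial_mul_pow (n : ℕ) {x : ℝ} (hx : 0 < x) :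
    exp (-1 / x) ≤ n ! * x ^ n := by
  have h : (1 / x) ^ n / n ! ≤ exp (1 / x) := Real.pow_div_factorial_le_exp _ (by positivity) n
  calc exp (-1 / x) = (exp (1 / x))⁻¹ := by rw [neg_div, exp_neg]
    _ ≤ ((1 / x) ^ n / n !)⁻¹ := inv_anti₀ (by positivity) h
    _ = n ! * x ^ n := by field_simp; rw [div_pow, one_pow, div_mul_cancel₀ _ (by positivity)]

lemma integrableOn_rpow_mul_exp_neg_one_div_sub_div (p : ℝ) {θ : ℝ} (hθ : 0 < θ) :
    IntegrableOn (fun x => x ^ p * exp (-1 / x - x / θ)) (Ioi 0) := by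
  obtain ⟨n, hn⟩ := exists_nat_gt (-p - 1)
  have hdom : IntegrableOn (fun x : ℝ => n ! * (x ^ (p + n) * exp (-θ⁻¹ * x ^ (1 : ℝ)))) (Ioi 0) :=
    (integrableOn_rpow_mul_exp_neg_mul_rpow (by linarith) one_pos (inv_pos.2 hθ)).const_mul _
  refine hdom.mono' (by fun_prop) ((ae_restrict_iff' measurableSet_Ioi).2 (ae_of_all _ ?_))
  intro x (hx : 0 < x)
  rw [norm_of_nonneg (by positivity), sub_eq_add_neg, exp_add, rpow_add hx, rpow_natCast,
    rpow_one, neg_mul, ← div_eq_inv_mul]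
  calc x ^ p * (exp (-1 / x) * exp (-(x / θ)))
      ≤ x ^ p * ((n ! * x ^ n) * exp (-(x / θ))) := by
        gcongr; exact exp_neg_one_div_le_factorial_mul_pow n hx
    _ = n ! * (x ^ p * x ^ n * exp (-(x / θ))) := by ring

lemma min_one_two_rpow_mul_rpow_le {s x : ℝ} (p : ℝ) (hs : 0 < s) (hsx : s ≤ x) (hx : x ≤ 2 * s) :
    min 1 (2 ^ p) * s ^ p ≤ x ^ p := by
  rcases le_total 0 p with hp | hp
  · calc min 1 (2 ^ p) * s ^ p ≤ 1 * s ^ p := by gcongr; exact min_le_left _ _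
      _ ≤ x ^ p := by rw [one_mul]; exact rpow_le_rpow hs.le hsx hp
  · calc min 1 (2 ^ p) * s ^ p ≤ 2 ^ p * s ^ p := by gcongr; exact min_le_right _ _
      _ = (2 * s) ^ p := (mul_rpow zero_le_two hs.le).symm
      _ ≤ x ^ p := rpow_le_rpow_of_nonpos (hs.trans_le hsx) hx hp

lemma min_one_two_rpow_mul_sqrt_rpow_mul_exp_le_integral (p : ℝ) {θ : ℝ} (hθ : 0 < θ) :
    min 1 (2 ^ p) * √θ ^ (p + 1) * exp (-3 / √θ)
      ≤ ∫ x in Ioi 0, x ^ p * exp (-1 / x - x / θ) := by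
  set s := √θ
  have hs : 0 < s := sqrt_pos.2 hθ
  have hss : s * s = θ := mul_self_sqrt hθ.le
  have hint := integrableOn_rpow_mul_exp_neg_one_div_sub_div p hθ
  have hsub : Ioc s (2 * s) ⊆ Ioi 0 := fun x hx => hs.trans hx.1
  have hbound : ∀ x ∈ Ioc s (2 * s),
      min 1 (2 ^ p) * s ^ p * exp (-3 / s) ≤ x ^ p * exp (-1 / x - x / θ) := by
    rintro x ⟨hsx, hx2s⟩
    have hx : 0 < x := hs.trans hsx
    have hexp : -3 / s ≤ -1 / x - x / θ := by
      have h1 : 1 / x ≤ 1 / s := one_div_le_one_div_of_le hs hsx.le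
      have h2 : x / θ ≤ 2 / s := by
        rw [← hss, div_le_div_iff₀ (by positivity) hs]; nlinarith
      rw [neg_div, neg_div, show 3 / s = 1 / s + 2 / s by ring]
      linarith
    gcongr
    exact min_one_two_rpow_mul_rpow_le p hs hsx.le hx2s
  calc min 1 (2 ^ p) * s ^ (p + 1) * exp (-3 / s)
      = min 1 (2 ^ p) * s ^ p * exp (-3 / s) * volume.real (Ioc s (2 * s)) := by
        rw [Real.volume_real_Ioc_of_le (by linarith), rpow_add_one hs.ne']; ring
    _ ≤ ∫ x in Ioc s (2 * s), x ^ p * exp (-1 / x - x / θ) :=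
        setIntegral_ge_of_const_le_real measurableSet_Ioc measure_Ioc_lt_top.ne hbound
          (hint.mono_set hsub)
    _ ≤ ∫ x in Ioi 0, x ^ p * exp (-1 / x - x / θ) :=
        setIntegral_mono_set hint
          ((ae_restrict_iff' measurableSet_Ioi).2 (ae_of_all _ fun x (hx : 0 < x) => by positivity))
          hsub.eventuallyLE

lemma tendsto_rpow_mul_exp_sub_three_mul_sqrt_atTop (q : ℝ) :
    Tendsto (fun t => t ^ q * exp (t - 3 * √t)) atTop atTop := by
  refine tendsto_atTop_mono' atTop ?_ (tendsto_exp_mul_div_rpow_atTop (-q) (1 / 2) one_half_pos)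
  filter_upwards [eventually_ge_atTop 36] with t ht
  have h6 : 6 ≤ √t := le_sqrt_of_sq_le (by linarith)
  have htt : √t * √t = t := mul_self_sqrt (by linarith)
  rw [rpow_neg (by linarith), div_inv_eq_mul, mul_comm]
  gcongr
  nlinarith

lemma tendsto_rpow_mul_exp_one_div_sub_three_div_sqrt (q : ℝ) :
    Tendsto (fun θ => θ ^ q * exp (1 / θ - 3 / √θ)) (𝓝[>] 0) atTop := by
  refine ((tendsto_rpow_mul_exp_sub_three_mul_sqrt_atTop (-q)).comp
    tendsto_inv_nhdsGT_zero).congr' ?_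
  filter_upwards [self_mem_nhdsWithin] with θ (hθ : 0 < θ)
  simp only [Function.comp_apply, inv_rpow hθ.le, rpow_neg hθ.le, inv_inv, sqrt_inv,
    div_eq_mul_inv, one_mul]

theorem density_ratio_first_level_tendsto_atTop_general (a1 a2 : ℝ) (ha2 : 0 < a2) :
    Tendsto
      (fun θ : ℝ => 1 / Real.Gamma a2 * θ ^ (a1 - a2) * Real.exp (1 / θ) *
        ∫ x in Set.Ioi (0 : ℝ), x ^ (-(a1 - a2 + 1)) * Real.exp (-1 / x - x / θ))
      (nhdsWithin 0 (Set.Ioi 0)) atTop ∧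
    ∀ᶠ θ : ℝ in nhdsWithin 0 (Set.Ioi 0),
      1 < 1 / Real.Gamma a2 * θ ^ (a1 - a2) * Real.exp (1 / θ) *
        ∫ x in Set.Ioi (0 : ℝ), x ^ (-(a1 - a2 + 1)) * Real.exp (-1 / x - x / θ) := by
  refine (fun h => ⟨h, h.eventually_gt_atTop 1⟩) ?_
  set p := -(a1 - a2 + 1)
  have hC : 0 < 1 / Gamma a2 * min 1 (2 ^ p) := by
    have := Gamma_pos_of_pos ha2
    positivity
  refine tendsto_atTop_mono' _ ?_
    ((tendsto_rpow_mul_exp_one_div_sub_three_div_sqrt ((a1 - a2) / 2)).const_mul_atTop hC)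
  filter_upwards [self_mem_nhdsWithin] with θ (hθ : 0 < θ)
  have hpow : θ ^ ((a1 - a2) / 2) = θ ^ (a1 - a2) * √θ ^ (p + 1) := by
    rw [sqrt_eq_rpow, ← rpow_mul hθ.le, ← rpow_add hθ]
    congr 1
    simp only [p]
    ring
  have hexp : exp (1 / θ - 3 / √θ) = exp (1 / θ) * exp (-3 / √θ) := by
    rw [← exp_add]
    ring_nf
  calc 1 / Gamma a2 * min 1 (2 ^ p) * (θ ^ ((a1 - a2) / 2) * exp (1 / θ - 3 / √θ))
      = 1 / Gamma a2 * θ ^ (a1 - a2) * exp (1 / θ) *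
          (min 1 (2 ^ p) * √θ ^ (p + 1) * exp (-3 / √θ)) := by
        rw [hpow, hexp]
        ring
    _ ≤ _ := by
        gcongr
        exact min_one_two_rpow_mul_sqrt_rpow_mul_exp_le_integral p hθ

/-- the ratio
`(1/Γ(a2)) θ^{a1-a2} e^{1/θ} ∫_0^∞ x^{-(a1-a2+1)} e^{-1/x - x/θ} dx` (the ratio of the
density of a product of independent `Inv-Ga(a1,1)` and `Inv-Ga(a2,1)` variables to the
density of `Inv-Ga(a1,1)`) tends to `+∞` as `θ → 0⁺`; in particular it eventually
exceeds `1` near `0`. -/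
theorem density_ratio_first_level_tendsto_atTop (a1 a2 : ℝ) (ha1 : 0 < a1) (ha2 : 0 < a2) :
    Tendsto
      (fun θ : ℝ => 1 / Real.Gamma a2 * θ ^ (a1 - a2) * Real.exp (1 / θ) *
        ∫ x in Set.Ioi (0 : ℝ), x ^ (-(a1 - a2 + 1)) * Real.exp (-1 / x - x / θ))
      (nhdsWithin 0 (Set.Ioi 0)) atTop ∧
    ∀ᶠ θ : ℝ in nhdsWithin 0 (Set.Ioi 0),
      1 < 1 / Real.Gamma a2 * θ ^ (a1 - a2) * Real.exp (1 / θ) *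
        ∫ x in Set.Ioi (0 : ℝ), x ^ (-(a1 - a2 + 1)) * Real.exp (-1 / x - x / θ) :=
  density_ratio_first_level_tendsto_atTop_general a1 a2 ha2
end

section
/- For every real ν, the Laplace-type integral ∫_0^∞ y^{−(ν+1)} · e^{−y − s/y} dy satisfies the asymptotic relation lim_{s → +∞} s^{ν/2 + 1/4} · e^{2√s} · ∫_0^∞ y^{−(ν+1)} e^{−y − s/y} dy = √π. (This is the statement, in integral form, that the modified Bessel function of the second kind satisfies K_ν(z) ≈ √(π/(2z)) e^{−z} as z → +∞, since ∫_0^∞ y^{−(ν+1)} e^{−y − z²/(4y)} dy = 2 (z/2)^{−ν} K_ν(z).) -/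
/-!
Laplace's method. The phase `y + s / y` has its minimum `2√s` at `y = √s`, with curvature of
order `s^{-1/2}`; the substitution `y = √s · e^{x/r}`, `r = s^{1/4}`, turns the normalized
integral into `∫ exp (-ν x / r - 2 r² (cosh (x / r) - 1)) dx`. As `r → ∞` the integrand tends
to `e^{-x²}`, and since `2 (cosh z - 1) ≥ z²` it is dominated by a fixed Gaussian once `r ≥ |ν|`,
so dominated convergence gives `∫ e^{-x²} = √π`.
-/

open MeasureTheory Real Filter Set Topology

lemma cosh_eq_one_add_two_mul_sinh_half_sq (z : ℝ) : cosh z = 1 + 2 * sinh (z / 2) ^ 2 := by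
  have h := cosh_two_mul (z / 2)
  rw [mul_div_cancel₀ z two_ne_zero, cosh_sq] at h
  linarith

lemma sq_le_two_mul_cosh_sub_one (z : ℝ) : z ^ 2 ≤ 2 * (cosh z - 1) := by
  have hsinh : |z / 2| ≤ |sinh (z / 2)| := by
    rw [abs_sinh]
    exact self_le_sinh_iff.mpr (abs_nonneg _)
  nlinarith [sq_le_sq.mpr hsinh, cosh_eq_one_add_two_mul_sinh_half_sq z]

lemma tendsto_mul_sinh_div_atTop (x : ℝ) :
    Tendsto (fun u => u * sinh (x / u)) atTop (𝓝 x) := by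
  rcases eq_or_ne x 0 with rfl | hx
  · simp
  have hslope : Tendsto (fun t => t⁻¹ * sinh t) (𝓝[≠] 0) (𝓝 1) := by
    simpa using (hasDerivAt_sinh 0).tendsto_slope_zero
  have hdiv : Tendsto (fun u => x / u) atTop (𝓝[≠] 0) :=
    tendsto_nhdsWithin_iff.mpr ⟨tendsto_const_nhds.div_atTop tendsto_id,
      (eventually_ne_atTop 0).mono fun u hu => div_ne_zero hx hu⟩
  have := (hslope.comp hdiv).const_mul x
  rw [mul_one] at this
  refine this.congr' ((eventually_ne_atTop 0).mono fun u hu => ?_)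
  simp only [Function.comp_apply, inv_div]
  field_simp

lemma tendsto_two_mul_sq_mul_cosh_div_sub_one (x : ℝ) :
    Tendsto (fun r => 2 * r ^ 2 * (cosh (x / r) - 1)) atTop (𝓝 (x ^ 2)) := by
  have h := ((tendsto_mul_sinh_div_atTop x).comp
    (tendsto_id.const_mul_atTop (two_pos : (0 : ℝ) < 2))).pow 2
  refine h.congr fun r => ?_
  simp only [Function.comp_apply, id, cosh_eq_one_add_two_mul_sinh_half_sq, div_div, mul_comm r 2]
  ring

/-- The integrand after the substitution `y = r² e^{x/r}`, `r = s^{1/4}`, including the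
normalizing factor `s^{ν/2+1/4} e^{2√s}`. -/
noncomputable def rescaledIntegrand (ν r x : ℝ) : ℝ :=
  exp (-(ν * (x / r)) - 2 * r ^ 2 * (cosh (x / r) - 1))

lemma tendsto_rescaledIntegrand (ν x : ℝ) :
    Tendsto (fun r => rescaledIntegrand ν r x) atTop (𝓝 (exp (-x ^ 2))) := by
  have hdrift : Tendsto (fun r => ν * (x / r)) atTop (𝓝 0) := by
    simpa using (tendsto_const_nhds.div_atTop tendsto_id).const_mul ν
  simp only [rescaledIntegrand]
  simpa [Function.comp_def] using (continuous_exp.tendsto _).comp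
    (hdrift.neg.sub (tendsto_two_mul_sq_mul_cosh_div_sub_one x))

lemma rescaledIntegrand_le {ν r : ℝ} (hr : 0 < r) (hνr : |ν| ≤ r) (x : ℝ) :
    rescaledIntegrand ν r x ≤ exp (1 / 2) * exp (-(1 / 2) * x ^ 2) := by
  have hdrift : -(ν * (x / r)) ≤ |x| := by
    calc -(ν * (x / r)) ≤ |ν| * (|x| / r) := by
          simpa [abs_mul, abs_div, abs_of_pos hr] using neg_le_abs (ν * (x / r))
      _ ≤ r * (|x| / r) := by gcongr
      _ = |x| := mul_div_cancel₀ _ hr.ne'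
  have hcosh : x ^ 2 ≤ 2 * r ^ 2 * (cosh (x / r) - 1) := by
    have := mul_le_mul_of_nonneg_left (sq_le_two_mul_cosh_sub_one (x / r)) (sq_nonneg r)
    rwa [div_pow, mul_div_cancel₀ _ (pow_ne_zero 2 hr.ne'), ← mul_assoc, mul_comm (r ^ 2)] at this
  rw [rescaledIntegrand, ← exp_add]
  gcongr
  nlinarith [sq_abs x, sq_nonneg (|x| - 1)]

lemma tendsto_integral_rescaledIntegrand (ν : ℝ) :
    Tendsto (fun r => ∫ x, rescaledIntegrand ν r x) atTop (𝓝 (√π)) := by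
  have hgauss : ∫ x, exp (-x ^ 2) = √π := by simpa using integral_gaussian 1
  rw [← hgauss]
  refine tendsto_integral_filter_of_dominated_convergence _ ?_ ?_
    ((integrable_exp_neg_mul_sq (by norm_num : (0 : ℝ) < 1 / 2)).const_mul (exp (1 / 2)))
    (ae_of_all _ (tendsto_rescaledIntegrand ν))
  · refine Eventually.of_forall fun r => Continuous.aestronglyMeasurable ?_
    unfold rescaledIntegrand
    fun_prop
  · filter_upwards [eventually_gt_atTop 0, eventually_ge_atTop |ν|] with r hr hνr
    exact ae_of_all _ fun x =>
      (Real.norm_of_nonneg (exp_pos _).le).trans_le (rescaledIntegrand_le hr hνr x)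

lemma integral_Ioi_zero_eq_integral_comp_mul_exp {E : Type*} [NormedAddCommGroup E]
    [NormedSpace ℝ E] (g : ℝ → E) {c r : ℝ} (hc : 0 < c) (hr : 0 < r) :
    ∫ y in Ioi 0, g y = ∫ x, (c / r * exp (x / r)) • g (c * exp (x / r)) := by
  have hderiv (x : ℝ) : HasDerivAt (fun x => c * exp (x / r)) (c / r * exp (x / r)) x := by
    refine (((hasDerivAt_id' x).div_const r).exp.const_mul c).congr_deriv ?_
    ring
  have hinj : Function.Injective (fun x => c * exp (x / r)) := fun a b hab => by
    simpa [hc.ne', hr.ne'] using hab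
  have himage : (fun x => c * exp (x / r)) '' univ = Ioi 0 := by
    refine Subset.antisymm (image_subset_iff.mpr fun x _ => mul_pos hc (exp_pos _)) fun y hy => ?_
    refine ⟨r * log (y / c), mem_univ _, ?_⟩
    simp only [mul_div_cancel_left₀ _ hr.ne', exp_log (div_pos hy hc)]
    field_simp
  rw [← himage, integral_image_eq_integral_abs_deriv_smul MeasurableSet.univ
    (fun x _ => (hderiv x).hasDerivWithinAt) hinj.injOn, setIntegral_univ]
  simp_rw [abs_of_pos (by positivity : 0 < c / r * exp (_ / r))]

lemma rpow_mul_exp_mul_integral_eq_integral_rescaledIntegrand (ν : ℝ) {r : ℝ} (hr : 0 < r) :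
    r ^ (2 * ν + 1) * exp (2 * r ^ 2) *
        ∫ y in Ioi 0, y ^ (-(ν + 1)) * exp (-y - r ^ 4 / y) =
      ∫ x, rescaledIntegrand ν r x := by
  rw [integral_Ioi_zero_eq_integral_comp_mul_exp _ (pow_pos hr 2) hr, ← integral_const_mul]
  congr 1 with x
  set u := x / r
  have hlog : log (r ^ 2 * exp u) = 2 * log r + u := by
    rw [log_mul (by positivity) (exp_pos u).ne', log_pow, log_exp]; push_cast; ring
  have hquot : r ^ 4 / (r ^ 2 * exp u) = r ^ 2 * exp (-u) := by
    rw [exp_neg]; field_simp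
  have hfactor : r ^ 2 / r = exp (log r) := by rw [exp_log hr]; field_simp
  rw [smul_eq_mul, rpow_def_of_pos hr, rpow_def_of_pos (by positivity), hlog, hquot, hfactor,
    rescaledIntegrand, cosh_eq]
  simp only [← exp_add]
  congr 1
  ring

/-- the asymptotics `K_ν(z) ≈ √(π/(2z)) e^{-z}` in integral form:
`lim_{s → ∞} s^{ν/2 + 1/4} e^{2√s} ∫_0^∞ y^{-(ν+1)} e^{-y - s/y} dy = √π`. -/
theorem bessel_integral_asymptotics (ν : ℝ) :
    Tendsto
      (fun s : ℝ => s ^ (ν / 2 + 1 / 4) * Real.exp (2 * Real.sqrt s) *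
        ∫ y in Set.Ioi (0 : ℝ), y ^ (-(ν + 1)) * Real.exp (-y - s / y))
      atTop (nhds (Real.sqrt Real.pi)) := by
  refine ((tendsto_integral_rescaledIntegrand ν).comp
    (tendsto_rpow_atTop (by norm_num : (0 : ℝ) < 1 / 4))).congr' ?_
  filter_upwards [eventually_gt_atTop 0] with s hs
  have hfourth : (s ^ (1 / 4 : ℝ)) ^ 4 = s := by
    rw [← rpow_natCast, ← rpow_mul hs.le]; norm_num
  have hsqrt : (s ^ (1 / 4 : ℝ)) ^ 2 = √s := by
    rw [sqrt_eq_rpow, ← rpow_natCast, ← rpow_mul hs.le]; norm_num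
  have hprefactor : (s ^ (1 / 4 : ℝ)) ^ (2 * ν + 1) = s ^ (ν / 2 + 1 / 4) := by
    rw [← rpow_mul hs.le]; ring_nf
  rw [Function.comp_apply,
    ← rpow_mul_exp_mul_integral_eq_integral_rescaledIntegrand ν (rpow_pos_of_pos hs _),
    hfourth, hsqrt, hprefactor]
end
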